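/- Let 0 < m < 1 and let a ∈ ℂ with Im(a) > 0 and 2√m·Im(a) ≥ (1−m)·|Re(a)|. Then for all u, v ∈ L^{m+1}(ℝ^N;ℂ), the function x ↦ (g(u(x)) − g(v(x)))·conj(u(x) − v(x)) is integrable on ℝ^N and Re( −i·a·∫_{ℝ^N} (g(u) − g(v))·conj(u − v) dx ) ≥ 0. -/

import Mathlib

/-!
Write `ζ = (g z - g w) * conj (z - w)`. Pointwise, `ζ` lies in the closed convex cone
`S = {2√m |Im ζ| ≤ (1 - m) Re ζ}`. If the segment `[w, z]` avoids `0`, then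
`g z - g w = ∫₀¹ Dg(γ t) (z - w) dt`, and for `γ ≠ 0`
`Dg(γ) h * conj h = |γ|^(m-1) |h|² (1 + (m - 1) cos φ e^{iφ})`, with `φ` the angle between `γ`
and `h`, lies in `S` by AM-GM. Otherwise `z * conj w` is a nonpositive real and `ζ ≥ 0`.
Integrating over `ℝ^N` preserves `S`, and the condition on `a` makes `ζ ↦ Re (-i a ζ)`
nonnegative on `S`.
-/

open MeasureTheory Set Filter
open scoped ENNReal Topology

noncomputable section

/-- `g(z) = |z|^(m-1) · z` (so that `g(0) = 0`, since `0 ^ (m-1) = 0` for `m < 1`). -/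
def gfun (m : ℝ) (z : ℂ) : ℂ := ((‖z‖ ^ (m - 1) : ℝ) : ℂ) * z

open Complex ComplexConjugate

def sector (α β : ℝ) : Set ℂ := {ζ | α * |ζ.im| ≤ β * ζ.re}

theorem ofReal_mem_sector {α β x : ℝ} (hβ : 0 ≤ β) (hx : 0 ≤ x) : (x : ℂ) ∈ sector α β := by
  simp only [sector, mem_ofPred_eq, ofReal_im, abs_zero, mul_zero, ofReal_re]
  positivity

theorem ofReal_mul_mem_sector {α β x : ℝ} {ζ : ℂ} (hx : 0 ≤ x) (hζ : ζ ∈ sector α β) :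
    (x : ℂ) * ζ ∈ sector α β := by
  simp only [sector, mem_ofPred_eq, re_ofReal_mul, im_ofReal_mul, abs_mul, abs_of_nonneg hx] at *
  nlinarith

theorem integral_mem_sector {X : Type*} [MeasurableSpace X] {μ : Measure X} {α β : ℝ}
    (hα : 0 ≤ α) {f : X → ℂ} (hf : Integrable f μ) (hmem : ∀ᵐ x ∂μ, f x ∈ sector α β) :
    ∫ x, f x ∂μ ∈ sector α β :=
  calc α * |(∫ x, f x ∂μ).im| = α * |∫ x, (f x).im ∂μ| := congrArg (α * |·|) (integral_im hf).symm
    _ ≤ α * ∫ x, |(f x).im| ∂μ := by gcongr; exact abs_integral_le_integral_abs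
    _ = ∫ x, α * |(f x).im| ∂μ := (integral_const_mul _ _).symm
    _ ≤ ∫ x, β * (f x).re ∂μ := integral_mono_ae (hf.im.abs.const_mul α) (hf.re.const_mul β) hmem
    _ = β * (∫ x, f x ∂μ).re := by rw [integral_const_mul]; exact congrArg (β * ·) (integral_re hf)

theorem re_neg_I_mul_nonneg_of_mem_sector {α β : ℝ} (hα : 0 < α) (hβ : 0 < β) {a K : ℂ}
    (hK : K ∈ sector α β) (ha : β * |a.re| ≤ α * a.im) : 0 ≤ (-I * a * K).re := by
  have hre : (-I * a * K).re = a.im * K.re + a.re * K.im := by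
    simp only [mul_re, mul_im, neg_re, neg_im, I_re, I_im]; ring
  have hKre : 0 ≤ K.re := (mul_nonneg_iff_of_pos_left hβ).1 (le_trans (by positivity) hK)
  rw [hre]
  have hK' : α * |K.im| ≤ β * K.re := hK
  suffices 0 ≤ α * (a.im * K.re + a.re * K.im) from (mul_nonneg_iff_of_pos_left hα).1 this
  calc 0 ≤ (α * a.im - β * |a.re|) * K.re := mul_nonneg (by linarith) hKre
    _ = α * a.im * K.re - |a.re| * (β * K.re) := by ring
    _ ≤ α * a.im * K.re - |a.re| * (α * |K.im|) := by gcongr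
    _ = α * (a.im * K.re - |a.re * K.im|) := by rw [abs_mul]; ring
    _ ≤ α * (a.im * K.re + a.re * K.im) := by gcongr; linarith [neg_abs_le (a.re * K.im)]

theorem two_sqrt_mul_abs_mul_le {m : ℝ} (hm : 0 ≤ m) (c d : ℝ) :
    2 * √m * |c * d| ≤ d ^ 2 + m * c ^ 2 := by
  have hsq := Real.sq_sqrt hm
  rw [abs_mul]
  nlinarith [sq_nonneg (|d| - √m * |c|), sq_abs c, sq_abs d]

theorem norm_gfun {m : ℝ} (hm : 0 < m) (z : ℂ) : ‖gfun m z‖ = ‖z‖ ^ m := by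
  rw [gfun, norm_mul, norm_real, Real.norm_of_nonneg (by positivity),
    ← Real.rpow_add_one' (norm_nonneg z) (by linarith), sub_add_cancel]

theorem norm_gfun_sub_mul_conj_le {m : ℝ} (hm : 0 < m) (z w : ℂ) :
    ‖(gfun m z - gfun m w) * conj (z - w)‖ ≤ 2 * (‖z‖ ^ (m + 1) + ‖w‖ ^ (m + 1)) := by
  set r := ‖z‖
  set s := ‖w‖
  have hr : 0 ≤ r := norm_nonneg z
  have hs : 0 ≤ s := norm_nonneg w
  have hcheb : 0 ≤ (r ^ m - s ^ m) * (r - s) := by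
    rcases le_total s r with h | h
    · exact mul_nonneg (sub_nonneg.2 (Real.rpow_le_rpow hs h hm.le)) (sub_nonneg.2 h)
    · exact mul_nonneg_of_nonpos_of_nonpos (sub_nonpos.2 (Real.rpow_le_rpow hr h hm.le))
        (sub_nonpos.2 h)
  calc ‖(gfun m z - gfun m w) * conj (z - w)‖ ≤ (r ^ m + s ^ m) * (r + s) := by
        rw [norm_mul, RCLike.norm_conj, ← norm_gfun hm, ← norm_gfun hm]
        gcongr <;> exact norm_sub_le _ _
    _ ≤ 2 * (r ^ m * r + s ^ m * s) := by linarith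
    _ = 2 * (r ^ (m + 1) + s ^ (m + 1)) := by
        rw [Real.rpow_add_one' hr (by linarith), Real.rpow_add_one' hs (by linarith)]

theorem measurable_gfun (m : ℝ) : Measurable (gfun m) := by
  refine measurable_of_continuousOn_compl_singleton 0 fun z hz => ?_
  have hz0 : z ≠ 0 := hz
  unfold gfun
  exact ContinuousAt.continuousWithinAt (by fun_prop (disch := simp [hz0]))

theorem integrable_gfun_sub_mul_conj {X : Type*} [MeasurableSpace X] {μ : Measure X} {m : ℝ}
    (hm : 0 < m) {u v : X → ℂ} (hu : MemLp u (ENNReal.ofReal (m + 1)) μ)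
    (hv : MemLp v (ENNReal.ofReal (m + 1)) μ) :
    Integrable (fun x => (gfun m (u x) - gfun m (v x)) * conj (u x - v x)) μ := by
  have hp0 : ENNReal.ofReal (m + 1) ≠ 0 := by simp; linarith
  have hpow : ∀ {f : X → ℂ}, MemLp f (ENNReal.ofReal (m + 1)) μ →
      Integrable (fun x => ‖f x‖ ^ (m + 1)) μ := fun hf => by
    simpa [ENNReal.toReal_ofReal (by linarith : 0 ≤ m + 1)] using
      hf.integrable_norm_rpow hp0 ENNReal.ofReal_ne_top
  have hmeas : AEStronglyMeasurable
      (fun x => (gfun m (u x) - gfun m (v x)) * conj (u x - v x)) μ := by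
    have hg := measurable_gfun m
    refine ((hg.comp_aemeasurable hu.aestronglyMeasurable.aemeasurable).aestronglyMeasurable.sub
      (hg.comp_aemeasurable hv.aestronglyMeasurable.aemeasurable).aestronglyMeasurable).mul ?_
    exact continuous_conj.comp_aestronglyMeasurable
      (hu.aestronglyMeasurable.sub hv.aestronglyMeasurable)
  exact (((hpow hu).add (hpow hv)).const_mul 2).mono' hmeas
    (ae_of_all _ fun x => norm_gfun_sub_mul_conj_le hm (u x) (v x))

def gfunDeriv (m : ℝ) (z h : ℂ) : ℂ :=
  ((‖z‖ ^ (m - 1) : ℝ) : ℂ) * (h + (((m - 1) * inner ℝ z h / ‖z‖ ^ 2 : ℝ) : ℂ) * z)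

theorem HasDerivAt.gfun_comp {m : ℝ} {γ : ℝ → ℂ} {γ' : ℂ} {t : ℝ} (hγ : HasDerivAt γ γ' t)
    (h0 : γ t ≠ 0) : HasDerivAt (fun s => gfun m (γ s)) (gfunDeriv m (γ t) γ') t := by
  have hpow : ∀ s, ‖γ s‖ ^ (m - 1) = (‖γ s‖ ^ 2) ^ ((m - 1) / 2) := fun s => by
    rw [← Real.rpow_natCast, ← Real.rpow_mul (norm_nonneg _)]; ring_nf
  have hρ : 0 < ‖γ t‖ := norm_pos_iff.2 h0
  have hnorm := hγ.norm_sq.rpow_const (p := (m - 1) / 2) (Or.inl (by positivity))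
  simp only [← hpow] at hnorm
  refine (hnorm.ofReal_comp.mul hγ).congr_deriv ?_
  rw [Real.rpow_sub_one (by positivity), ← hpow, gfunDeriv]
  push_cast
  field_simp
  ring

theorem continuousAt_gfunDeriv {m : ℝ} {z : ℂ} (hz : z ≠ 0) (h : ℂ) :
    ContinuousAt (fun z => gfunDeriv m z h) z := by
  unfold gfunDeriv
  fun_prop (disch := simp [hz])

theorem gfunDeriv_mul_conj_mem_sector {m : ℝ} (hm : 0 ≤ m) {z : ℂ} (hz : z ≠ 0) (h : ℂ) :
    gfunDeriv m z h * conj h ∈ sector (2 * √m) |1 - m| := by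
  set c := (z * conj h).re
  set d := (z * conj h).im
  have hρ : 0 < ‖z‖ := norm_pos_iff.2 hz
  have hcd : c ^ 2 + d ^ 2 = ‖z‖ ^ 2 * ‖h‖ ^ 2 := by
    rw [← mul_pow, ← norm_conj h, ← norm_mul, Complex.sq_norm, normSq_apply]; ring
  have hζ : gfunDeriv m z h * conj h =
      ((‖z‖ ^ (m - 1) / ‖z‖ ^ 2 : ℝ) : ℂ) *
        ((d ^ 2 + m * c ^ 2 : ℝ) + ((m - 1) * c * d : ℝ) * I) := by
    have hinner : inner ℝ z h = c := by
      simp only [c, Complex.inner, mul_re, conj_re, conj_im]; ring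
    have hh : (‖h‖ : ℂ) ^ 2 = ((c ^ 2 + d ^ 2) / ‖z‖ ^ 2 : ℝ) := by
      have : (‖z‖ : ℂ) ≠ 0 := ofReal_ne_zero.2 hρ.ne'
      rw [hcd]; push_cast; field_simp
    calc gfunDeriv m z h * conj h
        = ((‖z‖ ^ (m - 1) : ℝ) : ℂ) *
            (h * conj h + (((m - 1) * c / ‖z‖ ^ 2 : ℝ) : ℂ) * (z * conj h)) := by
          rw [gfunDeriv, hinner]; ring
      _ = _ := by
          rw [mul_conj', hh, ← re_add_im (z * conj h)]
          push_cast
          field_simp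
          ring
  rw [hζ]
  refine ofReal_mul_mem_sector (by positivity) ?_
  simp only [sector, mem_ofPred_eq, add_re, add_im, ofReal_re, ofReal_im, re_ofReal_mul,
    im_ofReal_mul, I_re, I_im, mul_zero, mul_one, add_zero, zero_add]
  calc 2 * √m * |(m - 1) * c * d| = |1 - m| * (2 * √m * |c * d|) := by
        rw [mul_assoc (m - 1), abs_mul, abs_sub_comm]; ring
    _ ≤ |1 - m| * (d ^ 2 + m * c ^ 2) := by gcongr; exact two_sqrt_mul_abs_mul_le hm c d

theorem im_eq_zero_and_re_nonpos_of_segment {z w : ℂ} {t : ℝ} (ht : t ∈ Icc (0 : ℝ) 1)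
    (h0 : w + t * (z - w) = 0) : (z * conj w).im = 0 ∧ (z * conj w).re ≤ 0 := by
  rcases ht.1.eq_or_lt with rfl | htpos
  · simp_all
  have hzw : (t : ℂ) * (z * conj w) = ((-(1 - t) * ‖w‖ ^ 2 : ℝ) : ℂ) := by
    push_cast; rw [← mul_conj']; linear_combination conj w * h0
  have him := congrArg im hzw
  have hre := congrArg re hzw
  simp only [re_ofReal_mul, im_ofReal_mul, ofReal_im, ofReal_re] at him hre
  refine ⟨(mul_eq_zero.1 him).resolve_left htpos.ne', ?_⟩
  nlinarith [ht.2, sq_nonneg ‖w‖]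

theorem gfun_sub_mul_conj_mem_sector_of_antiparallel (m : ℝ) {α β : ℝ} (hβ : 0 ≤ β) {z w : ℂ}
    (him : (z * conj w).im = 0) (hre : (z * conj w).re ≤ 0) :
    (gfun m z - gfun m w) * conj (z - w) ∈ sector α β := by
  set a := ‖z‖ ^ (m - 1)
  set b := ‖w‖ ^ (m - 1)
  set p := (z * conj w).re
  have hzw : z * conj w = p := ext rfl him
  have hwz : w * conj z = p := by rw [← conj_conj w, ← map_mul, mul_comm, hzw, conj_ofReal]
  have hζ : (gfun m z - gfun m w) * conj (z - w) =
      ((a * ‖z‖ ^ 2 + b * ‖w‖ ^ 2 + (a + b) * -p : ℝ) : ℂ) := by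
    simp only [gfun, map_sub]; push_cast
    linear_combination (a : ℂ) * mul_conj' z - a * hzw - b * hwz + b * mul_conj' w
  rw [hζ]
  have ha : 0 ≤ a := by positivity
  have hb : 0 ≤ b := by positivity
  exact ofReal_mem_sector hβ (by nlinarith [sq_nonneg ‖z‖, sq_nonneg ‖w‖])

theorem gfun_sub_mul_conj_mem_sector {m : ℝ} (hm : 0 ≤ m) (z w : ℂ) :
    (gfun m z - gfun m w) * conj (z - w) ∈ sector (2 * √m) |1 - m| := by
  by_cases hseg : ∃ t ∈ Icc (0 : ℝ) 1, w + t * (z - w) = 0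
  · obtain ⟨t, ht, h0⟩ := hseg
    obtain ⟨him, hre⟩ := im_eq_zero_and_re_nonpos_of_segment ht h0
    exact gfun_sub_mul_conj_mem_sector_of_antiparallel m (abs_nonneg _) him hre
  push Not at hseg
  set γ : ℝ → ℂ := fun t => w + t * (z - w)
  have hγ : ∀ t, HasDerivAt γ (z - w) t := fun t => by
    simpa [γ] using ((hasDerivAt_id t).ofReal_comp.mul_const (z - w)).const_add w
  have hcont : ContinuousOn (fun t => gfunDeriv m (γ t) (z - w)) (Icc 0 1) := fun t ht =>
    ((continuousAt_gfunDeriv (hseg t ht) _).comp (f := γ) (hγ t).continuousAt).continuousWithinAt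
  have hftc : ∫ t in (0 : ℝ)..1, gfunDeriv m (γ t) (z - w) = gfun m z - gfun m w := by
    have hFTC := intervalIntegral.integral_eq_sub_of_hasDerivAt
      (fun t ht => (hγ t).gfun_comp (hseg t (by simpa using ht)))
      (hcont.intervalIntegrable_of_Icc zero_le_one)
    simpa [γ] using hFTC
  rw [← hftc, ← intervalIntegral.integral_mul_const, intervalIntegral.integral_of_le zero_le_one]
  refine integral_mem_sector (by positivity)
    ((hcont.mul continuousOn_const).integrableOn_Icc.mono_set Ioc_subset_Icc_self) ?_
  filter_upwards [ae_restrict_mem measurableSet_Ioc] with t ht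
  exact gfunDeriv_mul_conj_mem_sector hm (hseg t (Ioc_subset_Icc_self ht)) _

theorem statement2_general (N : ℕ) (m : ℝ) (a : ℂ)
    (hm0 : 0 < m) (hm1 : m < 1)
    (hA : (1 - m) * |a.re| ≤ 2 * Real.sqrt m * a.im)
    (u v : (Fin N → ℝ) → ℂ)
    (hu : MemLp u (ENNReal.ofReal (m + 1)) volume)
    (hv : MemLp v (ENNReal.ofReal (m + 1)) volume) :
    Integrable
      (fun x => (gfun m (u x) - gfun m (v x)) * (starRingEnd ℂ) (u x - v x)) volume ∧
    0 ≤ (-Complex.I * a *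
      ∫ x, (gfun m (u x) - gfun m (v x)) * (starRingEnd ℂ) (u x - v x)).re := by
  have hint := integrable_gfun_sub_mul_conj hm0 hu hv
  refine ⟨hint, re_neg_I_mul_nonneg_of_mem_sector (by positivity) (sub_pos.2 hm1) ?_ hA⟩
  have hK := integral_mem_sector (by positivity) hint
    (ae_of_all _ fun x => gfun_sub_mul_conj_mem_sector hm0.le (u x) (v x))
  rwa [abs_of_pos (sub_pos.2 hm1)] at hK

/-- Let `0 < m < 1` and `a ∈ ℂ` with `Im a > 0` and
`2√m · Im a ≥ (1−m)·|Re a|`.  Then for all `u, v ∈ L^(m+1)(ℝ^N; ℂ)`, the function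
`x ↦ (g(u x) − g(v x)) · conj (u x − v x)` is integrable and
`Re(−i·a·∫ (g(u) − g(v)) · conj (u − v)) ≥ 0`. -/
theorem statement2 (N : ℕ) (hN : 1 ≤ N) (m : ℝ) (a : ℂ)
    (hm0 : 0 < m) (hm1 : m < 1) (haIm : 0 < a.im)
    (hA : (1 - m) * |a.re| ≤ 2 * Real.sqrt m * a.im)
    (u v : (Fin N → ℝ) → ℂ)
    (hu : MemLp u (ENNReal.ofReal (m + 1)) volume)
    (hv : MemLp v (ENNReal.ofReal (m + 1)) volume) :
    Integrable
      (fun x => (gfun m (u x) - gfun m (v x)) * (starRingEnd ℂ) (u x - v x)) volume ∧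
    0 ≤ (-Complex.I * a *
      ∫ x, (gfun m (u x) - gfun m (v x)) * (starRingEnd ℂ) (u x - v x)).re :=
  statement2_general N m a hm0 hm1 hA u v hu hv
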